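/- arXiv:2012.02400 — 5 statements merged into one kernel-verified Lean document; each statement's English description precedes it below -/
import Mathlib

section
/- Let T : RP^2 → RP^2 be a projective transformation (induced by an invertible linear map on R^3) and K ⊂ RP^2 a compact convex subset of an affine chart with nonempty interior. If T(K) ⊆ int(K), then T has at most one fixed point in K. -/
/-!
STATEMENT 1. A projective transformation `T` of `ℝP²` (induced by an injective
linear map of `ℝ³`) which maps a compact convex subset `K` of an affine chart
(with nonempty interior) into the interior of `K` has at most one fixed point
in `K`.  The affine chart is `(x, y) ↦ [x : y : 1]`.
-/

open Projectivization

/-- The standard affine chart `ℝ² → ℝP²`, `(x,y) ↦ [x : y : 1]`. -/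
noncomputable def affChart (p : ℝ × ℝ) : Projectivization ℝ (Fin 3 → ℝ) :=
  Projectivization.mk ℝ ![p.1, p.2, 1] (by
    intro h
    have := congrFun h 2
    simp at this)

private lemma vec_ne' (p : ℝ × ℝ) : (![p.1, p.2, 1] : Fin 3 → ℝ) ≠ 0 := by
  intro h; have := congrFun h 2; simp at this

private lemma eigen_of_fix (M : (Fin 3 → ℝ) →ₗ[ℝ] (Fin 3 → ℝ)) (hM : Function.Injective M)
    (X : ℝ × ℝ) (hfixX : Projectivization.map M hM (affChart X) = affChart X) :
    ∃ α : ℝ, α ≠ 0 ∧ M ![X.1, X.2, 1] = α • ![X.1, X.2, 1] := by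
  rw [affChart, Projectivization.map_mk] at hfixX
  obtain ⟨a, ha⟩ := (mk_eq_mk_iff' ℝ _ _ _ (vec_ne' X)).1 hfixX
  refine ⟨a, fun h0 => ?_, ha.symm⟩
  rw [h0, zero_smul] at ha
  exact vec_ne' X (hM (by rw [← ha, map_zero]))

private lemma key_step (M : (Fin 3 → ℝ) →ₗ[ℝ] (Fin 3 → ℝ)) (hM : Function.Injective M)
    (K : Set (ℝ × ℝ))
    (hmap : ∀ p ∈ K, ∃ q ∈ interior K,
      Projectivization.map M hM (affChart p) = affChart q)
    (X Y : ℝ × ℝ) (α β : ℝ)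
    (hα : M ![X.1, X.2, 1] = α • ![X.1, X.2, 1])
    (hβ : M ![Y.1, Y.2, 1] = β • ![Y.1, Y.2, 1])
    (t : ℝ) (hpt : ((1-t)*X.1 + t*Y.1, (1-t)*X.2 + t*Y.2) ∈ K) :
    (1-t)*α + t*β ≠ 0 ∧ ∃ s : ℝ, s * ((1-t)*α + t*β) = t*β ∧
      ((1-s)*X.1 + s*Y.1, (1-s)*X.2 + s*Y.2) ∈ interior K := by
  obtain ⟨q, hq, heq⟩ := hmap _ hpt
  rw [affChart, affChart, Projectivization.map_mk] at heq
  obtain ⟨c, hc⟩ := (mk_eq_mk_iff' ℝ _ _ _ (vec_ne' q)).1 heq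
  have hMv : M ![(1-t)*X.1 + t*Y.1, (1-t)*X.2 + t*Y.2, 1]
      = (1-t) • (α • ![X.1, X.2, 1]) + t • (β • ![Y.1, Y.2, 1]) := by
    rw [← hα, ← hβ, ← map_smul, ← map_smul, ← map_add]
    congr 1
    funext i
    fin_cases i <;> simp <;> ring
  rw [hMv] at hc
  have h2 := congrFun hc 2
  have h0 := congrFun hc 0
  have h1 := congrFun hc 1
  simp [Fin.isValue, Matrix.cons_val_zero, Matrix.cons_val_one] at h2 h0 h1
  have hcval : c = (1-t)*α + t*β := by linarith [h2]
  have hcne : c ≠ 0 := by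
    intro h0'
    rw [h0', zero_smul] at hc
    have : M ![(1-t)*X.1 + t*Y.1, (1-t)*X.2 + t*Y.2, 1] = M 0 := by
      rw [map_zero, hMv, ← hc]
    exact vec_ne' (((1-t)*X.1 + t*Y.1, (1-t)*X.2 + t*Y.2) : ℝ × ℝ) (hM this)
  refine ⟨hcval ▸ hcne, t*β/c, ?_, ?_⟩
  · rw [← hcval, div_mul_cancel₀ _ hcne]
  · have hqeq : ((1-(t*β/c))*X.1 + (t*β/c)*Y.1, (1-(t*β/c))*X.2 + (t*β/c)*Y.2) = q := by
      have e1 : (1-(t*β/c))*X.1 + (t*β/c)*Y.1 = q.1 := by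
        field_simp
        linear_combination -h0 + X.1 * hcval
      have e2 : (1-(t*β/c))*X.2 + (t*β/c)*Y.2 = q.2 := by
        field_simp
        linear_combination -h1 + X.2 * hcval
      exact Prod.ext e1 e2
    rw [hqeq]; exact hq

theorem proj_map_into_interior_at_most_one_fixed_point
    (M : (Fin 3 → ℝ) →ₗ[ℝ] (Fin 3 → ℝ)) (hM : Function.Injective M)
    (K : Set (ℝ × ℝ)) (hKcpt : IsCompact K) (hKconv : Convex ℝ K)
    (hKint : (interior K).Nonempty)
    -- `T = ℙ(M)` maps `K` into the interior of `K` (in the affine chart)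
    (hmap : ∀ p ∈ K, ∃ q ∈ interior K,
      Projectivization.map M hM (affChart p) = affChart q)
    (X Y : ℝ × ℝ) (hX : X ∈ K) (hY : Y ∈ K)
    (hfixX : Projectivization.map M hM (affChart X) = affChart X)
    (hfixY : Projectivization.map M hM (affChart Y) = affChart Y) :
    X = Y := by
  by_contra hne
  obtain ⟨α, hα0, hα⟩ := eigen_of_fix M hM X hfixX
  obtain ⟨β, hβ0, hβ⟩ := eigen_of_fix M hM Y hfixY
  set pt : ℝ → ℝ × ℝ := fun t => ((1-t)*X.1 + t*Y.1, (1-t)*X.2 + t*Y.2) with hptdef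
  have hptcont : Continuous pt := by fun_prop
  set S : Set ℝ := pt ⁻¹' K with hSdef
  have hSclosed : IsClosed S := hKcpt.isClosed.preimage hptcont
  have hSconv : Convex ℝ S := by
    intro t1 h1 t2 h2 a b ha hb hab
    have hpe : pt (a • t1 + b • t2) = a • pt t1 + b • pt t2 := by
      simp only [hptdef, smul_eq_mul, Prod.smul_mk, Prod.mk_add_mk, Prod.mk.injEq]
      exact ⟨by linear_combination (-X.1) * hab, by linear_combination (-X.2) * hab⟩
    show pt _ ∈ K
    rw [hpe]
    exact hKconv h1 h2 ha hb hab
  have hSbdd : Bornology.IsBounded S := by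
    obtain ⟨R, hR⟩ := hKcpt.isBounded.exists_norm_le
    rw [Metric.isBounded_iff_subset_closedBall 0]
    have hYX : (0:ℝ) < ‖Y - X‖ := by
      rw [norm_pos_iff, sub_ne_zero]
      exact fun h => hne h.symm
    refine ⟨(R + ‖X‖)/‖Y - X‖, fun t ht => ?_⟩
    simp only [Metric.mem_closedBall, dist_zero_right, Real.norm_eq_abs]
    rw [le_div_iff₀ hYX]
    have h1 : pt t - X = t • (Y - X) := by
      simp only [hptdef, Prod.ext_iff, Prod.smul_fst, Prod.smul_snd, Prod.fst_sub, Prod.snd_sub,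
        smul_eq_mul]
      constructor <;> ring
    have h2 : ‖pt t - X‖ ≤ R + ‖X‖ := by
      have := hR (pt t) ht
      have := norm_sub_le (pt t) X
      linarith
    calc |t| * ‖Y - X‖ = ‖t • (Y - X)‖ := by rw [norm_smul, Real.norm_eq_abs]
    _ = ‖pt t - X‖ := by rw [h1]
    _ ≤ R + ‖X‖ := h2
  have hScpt : IsCompact S := Metric.isCompact_iff_isClosed_bounded.2 ⟨hSclosed, hSbdd⟩
  have hS0 : (0:ℝ) ∈ S := by
    show pt 0 ∈ K
    have : pt 0 = X := by simp [hptdef]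
    rw [this]; exact hX
  have hS1 : (1:ℝ) ∈ S := by
    show pt 1 ∈ K
    have : pt 1 = Y := by simp [hptdef]
    rw [this]; exact hY
  have hSne : S.Nonempty := ⟨0, hS0⟩
  set tU := sSup S with htUdef
  set tL := sInf S with htLdef
  have htUS : tU ∈ S := hScpt.sSup_mem hSne
  have htLS : tL ∈ S := hScpt.sInf_mem hSne
  have h1tU : (1:ℝ) ≤ tU := le_csSup hScpt.bddAbove hS1
  have htL0 : tL ≤ (0:ℝ) := csInf_le hScpt.bddBelow hS0
  have hIccS : Set.Icc tL tU ⊆ S := fun u hu =>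
    hSconv.ordConnected.out htLS htUS hu
  -- endpoints are not mapped-from-interior points
  have hUnotint : pt tU ∉ interior K := by
    intro hint
    obtain ⟨ε, hε, hball⟩ := Metric.isOpen_iff.1 (isOpen_interior.preimage hptcont) tU hint
    have hmem : tU + ε/2 ∈ S := by
      have hb2 : tU + ε/2 ∈ Metric.ball tU ε := by
        rw [Metric.mem_ball, Real.dist_eq, show tU + ε/2 - tU = ε/2 by ring,
          abs_of_pos (by linarith)]
        linarith
      show pt _ ∈ K
      exact interior_subset (hball hb2)
    have := le_csSup hScpt.bddAbove hmem
    linarith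
  have hLnotint : pt tL ∉ interior K := by
    intro hint
    obtain ⟨ε, hε, hball⟩ := Metric.isOpen_iff.1 (isOpen_interior.preimage hptcont) tL hint
    have hmem : tL - ε/2 ∈ S := by
      have hb2 : tL - ε/2 ∈ Metric.ball tL ε := by
        rw [Metric.mem_ball, Real.dist_eq, show tL - ε/2 - tL = -(ε/2) by ring, abs_neg,
          abs_of_pos (by linarith)]
        linarith
      show pt _ ∈ K
      exact interior_subset (hball hb2)
    have := csInf_le hScpt.bddBelow hmem
    linarith
  -- apply the key step at the endpoints
  obtain ⟨hDU, sU, hsU, hsUint⟩ := key_step M hM K hmap X Y α β hα hβ tU htUS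
  obtain ⟨hDL, sL, hsL, hsLint⟩ := key_step M hM K hmap X Y α β hα hβ tL htLS
  have hsUS : sU ∈ S := by show pt sU ∈ K; exact interior_subset hsUint
  have hsLS : sL ∈ S := by show pt sL ∈ K; exact interior_subset hsLint
  have hsUne : sU ≠ tU := by
    intro h; exact hUnotint (h ▸ hsUint)
  have hsLne : sL ≠ tL := by
    intro h; exact hLnotint (h ▸ hsLint)
  have hsUlt : sU < tU := lt_of_le_of_ne (le_csSup hScpt.bddAbove hsUS) hsUne
  have hsLgt : tL < sL := lt_of_le_of_ne (csInf_le hScpt.bddBelow hsLS) (hsLne.symm)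
  -- strict: tU > 1 and tL < 0
  have htU1 : (1:ℝ) < tU := by
    rcases lt_or_eq_of_le h1tU with h | h
    · exact h
    · exfalso
      rw [← h] at hsU hsUlt
      have hsU1 : sU * β = 1 * β := by linear_combination hsU
      have : sU = 1 := mul_right_cancel₀ hβ0 hsU1
      rw [this] at hsUlt
      exact lt_irrefl _ hsUlt
  have htL0' : tL < (0:ℝ) := by
    rcases lt_or_eq_of_le htL0 with h | h
    · exact h
    · exfalso
      rw [h] at hsL hsLgt
      have hsL1 : sL * α = 0 * α := by linear_combination hsL
      have : sL = 0 := mul_right_cancel₀ hα0 hsL1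
      rw [this] at hsLgt
      exact lt_irrefl _ hsLgt
  -- sign analysis
  have hA2 : (sU - tU) * (((1-tU)*α + tU*β) * (β - α)) = tU*(1-tU)*(β-α)^2 := by
    linear_combination (β - α) * hsU
  have hB2 : (sL - tL) * (((1-tL)*α + tL*β) * (β - α)) = tL*(1-tL)*(β-α)^2 := by
    linear_combination (β - α) * hsL
  have hba : β - α ≠ 0 := by
    intro h
    have hA : (sU - tU) * ((1-tU)*α + tU*β) = tU*(1-tU)*(β-α) := by
      linear_combination hsU
    rw [h, mul_zero] at hA
    exact mul_ne_zero (sub_ne_zero.2 hsUne) hDU hA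
  have hsq : (0:ℝ) < (β - α)^2 := by positivity
  have hnegU : tU*(1-tU) < 0 := by nlinarith
  have hnegL : tL*(1-tL) < 0 := by nlinarith
  have hRU : tU*(1-tU)*(β-α)^2 < 0 := mul_neg_of_neg_of_pos hnegU hsq
  have hRL : tL*(1-tL)*(β-α)^2 < 0 := mul_neg_of_neg_of_pos hnegL hsq
  have hDUpos : 0 < ((1-tU)*α + tU*β) * (β - α) := by
    by_contra hcon
    push_neg at hcon
    have := mul_nonneg (neg_nonneg.2 (by linarith : sU - tU ≤ 0)) (neg_nonneg.2 hcon)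
    nlinarith [hA2, hRU]
  have hDLneg : ((1-tL)*α + tL*β) * (β - α) < 0 := by
    by_contra hcon
    push_neg at hcon
    have := mul_nonneg (by linarith : (0:ℝ) ≤ sL - tL) hcon
    linarith [hB2, hRL]
  -- IVT contradiction
  have hopps : ((1-tL)*α + tL*β) * ((1-tU)*α + tU*β) < 0 := by
    have hprod := mul_neg_of_pos_of_neg hDUpos hDLneg
    nlinarith [hprod, hsq]
  have hcont : ContinuousOn (fun t : ℝ => (1-t)*α + t*β) (Set.uIcc tL tU) :=
    Continuous.continuousOn (by fun_prop)
  have h0mem : (0:ℝ) ∈ Set.uIcc ((1-tL)*α + tL*β) ((1-tU)*α + tU*β) := by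
    rcases mul_neg_iff.1 hopps with ⟨h1, h2⟩ | ⟨h1, h2⟩
    · exact Set.mem_uIcc.2 (Or.inr ⟨h2.le, h1.le⟩)
    · exact Set.mem_uIcc.2 (Or.inl ⟨h1.le, h2.le⟩)
  obtain ⟨t0, ht0mem, ht0⟩ := intermediate_value_uIcc hcont h0mem
  have ht0S : t0 ∈ S := by
    apply hIccS
    rwa [Set.uIcc_of_le (by linarith : tL ≤ tU)] at ht0mem
  exact (key_step M hM K hmap X Y α β hα hβ t0 ht0S).1 ht0
end

section
/- Let P be a convex polygon with vertices labeled counterclockwise, d_i the vector from vertex i−1 to vertex i+1, and A_i the (positive) area of the triangle formed by vertices i−1, i, i+1. If the origin is in the interior of P, then n + Σ_{i=1}^n (1/A_i)·det[(x_{i−1}, x_{i+1}); (y_{i−1}, y_{i+1})] > 0, where (x_j, y_j) are the coordinates of vertex j. -/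
/-!
STATEMENT 3. For a convex polygon with counterclockwise vertices
`p i = (x i, y i)` containing the origin in its interior,
`n + ∑ i (1 / A i) · (x_{i-1} y_{i+1} − x_{i+1} y_{i-1}) > 0`,
where `A i` is the area of the triangle with vertices `i − 1, i, i + 1`.
-/

/-- Planar cross product. -/
def cross2 (a b : ℝ × ℝ) : ℝ := a.1 * b.2 - a.2 * b.1

/-- `p` is a strictly convex polygon with vertices labeled counterclockwise. -/
def ConvexCCW {n : ℕ} [NeZero n] (p : Fin n → ℝ × ℝ) : Prop :=
  ∀ i j : Fin n, j ≠ i → j ≠ i + 1 → 0 < cross2 (p (i + 1) - p i) (p j - p i)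

/-!
Write `u i = cross2 (p i) (p (i + 1))`, positive because the origin is interior, and
`χ i = cross2 (p (i - 1)) (p (i + 1))` for the numerators. Then `χ i = u (i - 1) + u i - 2 A i`,
so every term `χ i / A i` exceeds `-2`, and it is negative only when the origin lies in the ear
cut off from `P` by the chord `p (i - 1) p (i + 1)`. Ears at non-adjacent vertices have disjoint
interiors, so for `n ≥ 4` at most two terms are negative and
`n + ∑ i, χ i / A i > n - 4 ≥ 0`.
For a triangle all `A i` coincide and the sum is exactly `-2`.
-/

open Finset

def doubleArea (a b c : ℝ × ℝ) : ℝ := cross2 (b - a) (c - a)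

section doubleArea

variable (a b c q r s : ℝ × ℝ)

theorem doubleArea_rotate : doubleArea a b c = doubleArea b c a := by
  simp only [doubleArea, cross2, Prod.fst_sub, Prod.snd_sub]; ring

theorem doubleArea_swap : doubleArea a b c = -doubleArea a c b := by
  simp only [doubleArea, cross2, Prod.fst_sub, Prod.snd_sub]; ring

theorem doubleArea_repeat_first : doubleArea a b a = 0 := by
  simp only [doubleArea, cross2, Prod.fst_sub, Prod.snd_sub]; ring

theorem doubleArea_repeat_second : doubleArea a b b = 0 := by
  simp only [doubleArea, cross2, Prod.fst_sub, Prod.snd_sub]; ring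

theorem cross2_sub_sub_eq_doubleArea : cross2 (b - a) (c - b) = doubleArea a b c := by
  simp only [doubleArea, cross2, Prod.fst_sub, Prod.snd_sub]; ring

theorem cross2_sub_zero_sub : cross2 (b - a) ((0, 0) - a) = cross2 a b := by
  simp only [cross2, Prod.fst_sub, Prod.snd_sub]; ring

theorem fst_mul_snd_sub_eq_cross2 : a.1 * b.2 - b.1 * a.2 = cross2 a b := by
  simp only [cross2]; ring

theorem cross2_eq_sub_doubleArea : cross2 a c = cross2 a b + cross2 b c - doubleArea a b c := by
  simp only [doubleArea, cross2, Prod.fst_sub, Prod.snd_sub]; ring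

/-- The affine function `doubleArea r s` evaluated at `q`, expanded in barycentric coordinates
of `q` with respect to the triangle `a b c`. -/
theorem doubleArea_mul_doubleArea :
    doubleArea a b c * doubleArea r s q =
      doubleArea q b c * doubleArea r s a + doubleArea a q c * doubleArea r s b +
        doubleArea a b q * doubleArea r s c := by
  simp only [doubleArea, cross2, Prod.fst_sub, Prod.snd_sub]; ring

/-- `doubleArea_mul_doubleArea` at `q = 0`. -/
theorem doubleArea_mul_cross2 :
    doubleArea a b c * cross2 r s =
      cross2 b c * doubleArea r s a - cross2 a c * doubleArea r s b +
        cross2 a b * doubleArea r s c := by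
  simp only [doubleArea, cross2, Prod.fst_sub, Prod.snd_sub]; ring

variable {a b c}

theorem neg_two_lt_cross2_div (hab : 0 < cross2 a b) (hbc : 0 < cross2 b c)
    (habc : 0 < doubleArea a b c) : -2 < cross2 a c / (doubleArea a b c / 2) := by
  rw [lt_div_iff₀ (by positivity)]
  linarith [cross2_eq_sub_doubleArea a b c]

end doubleArea

section FinArith

open Fin.CommRing

variable {n : ℕ} [NeZero n] (i : Fin n)

theorem Fin.add_one_ne_self (hn : 2 ≤ n) : i + 1 ≠ i := by
  intro h
  have : (1 : Fin n) = 0 := by linear_combination h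
  simp [Fin.ext_iff, Nat.mod_eq_of_lt (show 1 < n by omega)] at this

theorem Fin.add_one_ne_sub_one (hn : 3 ≤ n) : i + 1 ≠ i - 1 := by
  intro h
  have : (2 : Fin n) = 0 := by linear_combination h
  simp [Fin.ext_iff, Nat.mod_eq_of_lt (show 2 < n by omega)] at this

theorem Fin.add_one_ne_sub_two (hn : 4 ≤ n) : i + 1 ≠ i - 1 - 1 := by
  intro h
  have : (3 : Fin n) = 0 := by linear_combination h
  simp [Fin.ext_iff, Nat.mod_eq_of_lt (show 3 < n by omega)] at this

end FinArith

theorem Fin.card_le_two_of_forall_adjacent {n : ℕ} [NeZero n] (hn : 4 ≤ n) {s : Finset (Fin n)}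
    (hs : ∀ i ∈ s, ∀ j ∈ s, j = i - 1 ∨ j = i ∨ j = i + 1) : #s ≤ 2 := by
  rcases s.eq_empty_or_nonempty with rfl | ⟨i, hi⟩
  · simp
  have not_both : i - 1 ∈ s → i + 1 ∉ s := fun hl hr => by
    rcases hs _ hl _ hr with h | h | h
    · exact Fin.add_one_ne_sub_two i hn h
    · exact Fin.add_one_ne_sub_one i (by omega) h
    · exact Fin.add_one_ne_self i (by omega) (by rw [h, sub_add_cancel])
  by_cases hl : i - 1 ∈ s
  · refine (card_le_card (t := {i - 1, i}) fun j hj => ?_).trans card_le_two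
    rcases hs i hi j hj with rfl | rfl | rfl <;> simp_all
  · refine (card_le_card (t := {i, i + 1}) fun j hj => ?_).trans card_le_two
    rcases hs i hi j hj with rfl | rfl | rfl <;> simp_all

theorem card_add_sum_pos_of_neg_two_lt {ι : Type*} [Fintype ι] [Nonempty ι] (t : ι → ℝ)
    (hlow : ∀ i, -2 < t i) (hneg : 2 * #{i | t i < 0} ≤ Fintype.card ι) :
    0 < Fintype.card ι + ∑ i, t i := by
  set B : Finset ι := {i | t i < 0}
  have hsum : ∑ i ∈ B, t i ≤ ∑ i, t i :=
    sum_le_sum_of_subset_of_nonneg (subset_univ B) fun i _ hi => by simpa [B] using hi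
  rcases B.eq_empty_or_nonempty with hB | hB
  · have : (0 : ℝ) < Fintype.card ι := by exact_mod_cast Fintype.card_pos
    simp only [hB, sum_empty] at hsum
    linarith
  · have hlt : ∑ i ∈ B, (-2 : ℝ) < ∑ i ∈ B, t i :=
      sum_lt_sum_of_nonempty hB fun i _ => hlow i
    have : (2 * #B : ℝ) ≤ Fintype.card ι := by exact_mod_cast hneg
    simp only [sum_const, nsmul_eq_mul] at hlt
    linarith

namespace ConvexCCW

variable {n : ℕ} [NeZero n] {p : Fin n → ℝ × ℝ}

theorem doubleArea_edge_nonneg (hconv : ConvexCCW p) (m j : Fin n) :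
    0 ≤ doubleArea (p m) (p (m + 1)) (p j) := by
  by_cases hj : j = m
  · rw [hj, doubleArea_repeat_first]
  by_cases hj' : j = m + 1
  · rw [hj', doubleArea_repeat_second]
  exact (hconv m j hj hj').le

theorem doubleArea_pos (hconv : ConvexCCW p) (hn : 3 ≤ n) (i : Fin n) :
    0 < doubleArea (p (i - 1)) (p i) (p (i + 1)) := by
  have h := hconv (i - 1) (i + 1) (Fin.add_one_ne_sub_one i hn)
    (by rw [sub_add_cancel]; exact Fin.add_one_ne_self i (by omega))
  rwa [sub_add_cancel] at h

theorem doubleArea_chord_nonneg (hconv : ConvexCCW p) {i m : Fin n} (hm : m ≠ i) :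
    0 ≤ doubleArea (p (i - 1)) (p (i + 1)) (p m) := by
  by_cases hm₁ : m = i - 1
  · rw [hm₁, doubleArea_repeat_first]
  by_cases hm₂ : m = i + 1
  · rw [hm₂, doubleArea_repeat_second]
  by_contra! hneg
  have h₁ : 0 < doubleArea (p m) (p i) (p (i + 1)) := by
    rw [doubleArea_rotate]; exact hconv i m hm hm₂
  have h₂ : 0 < doubleArea (p (i - 1)) (p m) (p (i + 1)) := by
    rw [doubleArea_swap]; linarith
  have h₃ : 0 < doubleArea (p (i - 1)) (p i) (p m) := by
    have h := hconv (i - 1) m hm₁ (by rwa [sub_add_cancel])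
    rwa [sub_add_cancel] at h
  have k₁ := hconv.doubleArea_edge_nonneg m (i - 1)
  have k₂ : 0 < doubleArea (p m) (p (m + 1)) (p i) :=
    hconv m i (Ne.symm hm) fun h => hm₁ (eq_sub_of_add_eq h.symm)
  have k₃ : 0 < doubleArea (p m) (p (m + 1)) (p (i + 1)) :=
    hconv m (i + 1) (Ne.symm hm₂) fun h => hm (add_right_cancel h).symm
  have key := doubleArea_mul_doubleArea (p (i - 1)) (p i) (p (i + 1)) (p m) (p m) (p (m + 1))
  rw [doubleArea_repeat_first, mul_zero] at key
  linarith [mul_nonneg h₁.le k₁, mul_pos h₂ k₂, mul_pos h₃ k₃]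

theorem adjacent_of_cross2_neg (hconv : ConvexCCW p) (hn : 3 ≤ n)
    (hu : ∀ i, 0 < cross2 (p i) (p (i + 1))) {i j : Fin n}
    (hi : cross2 (p (i - 1)) (p (i + 1)) < 0) (hj : cross2 (p (j - 1)) (p (j + 1)) < 0) :
    j = i - 1 ∨ j = i ∨ j = i + 1 := by
  by_contra! hji
  obtain ⟨hji₁, hji₂, hji₃⟩ := hji
  have l₁ := hconv.doubleArea_chord_nonneg (i := i) (m := j - 1) fun h =>
    hji₃ (by rw [← h, sub_add_cancel])
  have l₂ := hconv.doubleArea_chord_nonneg hji₂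
  have l₃ := hconv.doubleArea_chord_nonneg (i := i) (m := j + 1) fun h =>
    hji₁ (by rw [← h, add_sub_cancel_right])
  have u₁ : 0 < cross2 (p (j - 1)) (p j) := by simpa using hu (j - 1)
  have key := doubleArea_mul_cross2 (p (j - 1)) (p j) (p (j + 1)) (p (i - 1)) (p (i + 1))
  linarith [mul_neg_of_pos_of_neg (hconv.doubleArea_pos hn j) hi, mul_nonneg (hu j).le l₁,
    mul_nonneg (neg_nonneg.2 hj.le) l₂, mul_nonneg u₁.le l₃]

end ConvexCCW

theorem sum_cross2_div_eq_neg_two_of_fin_three {p : Fin 3 → ℝ × ℝ} {A : Fin 3 → ℝ}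
    (hA : ∀ i, A i = doubleArea (p (i - 1)) (p i) (p (i + 1)) / 2)
    (hT : doubleArea (p 2) (p 0) (p 1) ≠ 0) :
    ∑ i, cross2 (p (i - 1)) (p (i + 1)) / A i = -2 := by
  have h₁ := doubleArea_rotate (p 0) (p 1) (p 2)
  have h₂ := doubleArea_rotate (p 1) (p 2) (p 0)
  simp only [Fin.sum_univ_three, hA, Fin.reduceSub, Fin.reduceAdd, Fin.isValue]
  rw [h₁, h₂]
  field_simp
  simp only [doubleArea, cross2, Prod.fst_sub, Prod.snd_sub]
  ring

theorem glick_infinity_coefficient_positive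
    {n : ℕ} [NeZero n] (hn : 3 ≤ n)
    (p : Fin n → ℝ × ℝ) (hconv : ConvexCCW p)
    -- the origin lies in the interior of `P`
    (hO : ∀ i, 0 < cross2 (p (i + 1) - p i) ((0, 0) - p i))
    -- `A i` is the area of the triangle with vertices `i-1`, `i`, `i+1`
    (A : Fin n → ℝ)
    (hA : ∀ i, A i = cross2 (p i - p (i - 1)) (p (i + 1) - p i) / 2) :
    0 < (n : ℝ) + ∑ i : Fin n,
      ((p (i - 1)).1 * (p (i + 1)).2 - (p (i + 1)).1 * (p (i - 1)).2) / A i := by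
  have hA' : ∀ i, A i = doubleArea (p (i - 1)) (p i) (p (i + 1)) / 2 := fun i => by
    rw [hA, cross2_sub_sub_eq_doubleArea]
  have hT := hconv.doubleArea_pos hn
  simp only [fst_mul_snd_sub_eq_cross2]
  obtain rfl | hn4 := hn.eq_or_lt
  · rw [sum_cross2_div_eq_neg_two_of_fin_three hA' (hT 0).ne']
    norm_num
  have hu : ∀ i, 0 < cross2 (p i) (p (i + 1)) := fun i => cross2_sub_zero_sub (p i) _ ▸ hO i
  have hlow : ∀ i, -2 < cross2 (p (i - 1)) (p (i + 1)) / A i := fun i => by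
    rw [hA']
    exact neg_two_lt_cross2_div (by simpa using hu (i - 1)) (hu i) (hT i)
  have hneg : ∀ i, cross2 (p (i - 1)) (p (i + 1)) / A i < 0 →
      cross2 (p (i - 1)) (p (i + 1)) < 0 := fun i h =>
    neg_of_div_neg_left h (by rw [hA']; linarith [hT i])
  have hcard := Fin.card_le_two_of_forall_adjacent hn4
    (s := {i | cross2 (p (i - 1)) (p (i + 1)) / A i < 0}) fun i hi j hj =>
      hconv.adjacent_of_cross2_neg hn hu (hneg i (by simpa using hi)) (hneg j (by simpa using hj))
  simpa using card_add_sum_pos_of_neg_two_lt _ hlow (by simp only [Fintype.card_fin]; omega)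
end

section
/- Glick's operator is projectively self-dual: for a polygon P with vertices given by homogeneous coordinate vectors v_1,...,v_n ∈ R^3, and the dual polygon P* with vertices the covectors w_i ∈ (R^3)* vanishing on v_i and v_{i+1}, the operator G_{P*} on (R^3)* equals the dual (transpose) of G_P, where G_P(v) = n·v − Σ_i [(v_{i−1} ∧ v ∧ v_{i+1})/(v_{i−1} ∧ v_i ∧ v_{i+1})]·v_i, with u ∧ v ∧ w denoting det(u,v,w). -/
/-!
Pairing `G_P y` with `x` gives `n ⟪x, y⟫` minus a sum of one term per vertex, and likewise
for `G_{P*}`. With `w i = v i × v (i+1)`, the dual term at index `i` is computed from the four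
vertices `v (i-1), …, v (i+2)` by the identities `det (a×b, b×c, c×d) = det (a,b,c) det (b,c,d)`
and a Plücker relation: it equals the primal term at index `i` with `x` and `y` swapped, plus a
difference `F (i-1) - F i`, where `F i = ⟪x, v i⟫ det (v (i+1), v (i+2), y) / det (v i, v (i+1), v (i+2))`.
These differences telescope around the polygon.
-/

/-- Determinant of three vectors in `ℝ³`. -/
def det3 (a b c : Fin 3 → ℝ) : ℝ :=
  a 0 * (b 1 * c 2 - b 2 * c 1) - a 1 * (b 0 * c 2 - b 2 * c 0)
    + a 2 * (b 0 * c 1 - b 1 * c 0)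

/-- Cross product in `ℝ³`. -/
def cross3 (a b : Fin 3 → ℝ) : Fin 3 → ℝ :=
  ![a 1 * b 2 - a 2 * b 1, a 2 * b 0 - a 0 * b 2, a 0 * b 1 - a 1 * b 0]

/-- Standard pairing on `ℝ³`. -/
def dot3 (a b : Fin 3 → ℝ) : ℝ := a 0 * b 0 + a 1 * b 1 + a 2 * b 2

/-- Glick's operator of a polygon with vertex lifts `v`. -/
noncomputable def glick {n : ℕ} [NeZero n] (v : Fin n → Fin 3 → ℝ)
    (x : Fin 3 → ℝ) : Fin 3 → ℝ :=
  (n : ℝ) • x -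
    ∑ i : Fin n,
      (det3 (v (i - 1)) x (v (i + 1)) / det3 (v (i - 1)) (v i) (v (i + 1))) • v i

lemma dot3_eq_dotProduct (a b : Fin 3 → ℝ) : dot3 a b = a ⬝ᵥ b := by
  simp [dot3, dotProduct, Fin.sum_univ_three]

lemma dot3_comm (a b : Fin 3 → ℝ) : dot3 a b = dot3 b a := by
  simp only [dot3_eq_dotProduct, dotProduct_comm]

lemma dot3_cross3 (a b y : Fin 3 → ℝ) : dot3 (cross3 a b) y = det3 a b y := by
  simp only [dot3, cross3, det3, Matrix.cons_val]; ring

lemma det3_cross3_cross3_cross3 (a b c d : Fin 3 → ℝ) :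
    det3 (cross3 a b) (cross3 b c) (cross3 c d) = det3 a b c * det3 b c d := by
  simp only [det3, cross3, Matrix.cons_val]; ring

lemma det3_cross3_left_right (a b c d x : Fin 3 → ℝ) :
    det3 (cross3 a b) x (cross3 c d) = det3 b c d * dot3 x a - det3 a c d * dot3 x b := by
  simp only [det3, cross3, dot3, Matrix.cons_val]; ring

lemma det3_plucker (a b c d y : Fin 3 → ℝ) :
    det3 a c d * det3 b c y = det3 c d y * det3 a b c - det3 a y c * det3 b c d := by
  simp only [det3]; ring

lemma dot3_glick {n : ℕ} [NeZero n] (v : Fin n → Fin 3 → ℝ) (x y : Fin 3 → ℝ) :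
    dot3 (glick v x) y = n * dot3 x y -
      ∑ i, det3 (v (i - 1)) x (v (i + 1)) / det3 (v (i - 1)) (v i) (v (i + 1)) * dot3 (v i) y := by
  simp only [glick, dot3_eq_dotProduct, sub_dotProduct, smul_dotProduct, sum_dotProduct,
    smul_eq_mul]

lemma glick_dual_term (a b c d x y : Fin 3 → ℝ) (habc : det3 a b c ≠ 0) (hbcd : det3 b c d ≠ 0) :
    det3 (cross3 a b) x (cross3 c d) / det3 (cross3 a b) (cross3 b c) (cross3 c d)
        * dot3 (cross3 b c) y
      = det3 a y c / det3 a b c * dot3 b x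
        + (dot3 x a * det3 b c y / det3 a b c - dot3 x b * det3 c d y / det3 b c d) := by
  rw [det3_cross3_cross3_cross3, det3_cross3_left_right, dot3_cross3, dot3_comm b x]
  field_simp
  linear_combination (-dot3 x b) * det3_plucker a b c d y

lemma Fin.sum_sub_one_sub_eq_zero {n : ℕ} [NeZero n] {M : Type*} [AddCommGroup M]
    (f : Fin n → M) : ∑ i, (f (i - 1) - f i) = 0 := by
  rw [Finset.sum_sub_distrib, sub_eq_zero]
  exact Fintype.sum_equiv (Equiv.subRight 1) _ _ fun _ => rfl

theorem glick_operator_self_dual_general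
    {n : ℕ} [NeZero n]
    (v : Fin n → Fin 3 → ℝ)
    -- consecutive triples of vertices are in general position
    (hgen : ∀ i, det3 (v (i - 1)) (v i) (v (i + 1)) ≠ 0)
    -- `w` are the standardly normalized lifts of the vertices of `P*`
    (w : Fin n → Fin 3 → ℝ) (hw : ∀ i, w i = cross3 (v i) (v (i + 1))) :
    ∀ x y : Fin 3 → ℝ, dot3 (glick w x) y = dot3 x (glick v y) := by
  intro x y
  rw [dot3_comm x (glick v y), dot3_glick, dot3_glick, dot3_comm y x]
  congr 1
  set F : Fin n → ℝ := fun i =>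
    dot3 x (v i) * det3 (v (i + 1)) (v (i + 1 + 1)) y / det3 (v i) (v (i + 1)) (v (i + 1 + 1))
  have hterm : ∀ i : Fin n,
      det3 (w (i - 1)) x (w (i + 1)) / det3 (w (i - 1)) (w i) (w (i + 1)) * dot3 (w i) y
        = det3 (v (i - 1)) y (v (i + 1)) / det3 (v (i - 1)) (v i) (v (i + 1)) * dot3 (v i) x
          + (F (i - 1) - F i) := by
    intro i
    have hnext := hgen (i + 1)
    rw [add_sub_cancel_right] at hnext
    simp only [hw, F, sub_add_cancel]
    exact glick_dual_term _ _ _ _ x y (hgen i) hnext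
  rw [Finset.sum_congr rfl fun i _ => hterm i, Finset.sum_add_distrib,
    Fin.sum_sub_one_sub_eq_zero, add_zero]

theorem glick_operator_self_dual
    {n : ℕ} [NeZero n] (hn : 3 ≤ n)
    (v : Fin n → Fin 3 → ℝ)
    -- consecutive triples of vertices are in general position
    (hgen : ∀ i, det3 (v (i - 1)) (v i) (v (i + 1)) ≠ 0)
    -- `w` are the standardly normalized lifts of the vertices of `P*`
    (w : Fin n → Fin 3 → ℝ) (hw : ∀ i, w i = cross3 (v i) (v (i + 1))) :
    ∀ x y : Fin 3 → ℝ, dot3 (glick w x) y = dot3 x (glick v y) :=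
  glick_operator_self_dual_general v hgen w hw
end

section
/- Let P be a convex polygon in the affine plane with vertices (x_i, y_i) in counterclockwise order, and define the vector d_P = Σ_i d_i / A_i where d_i is the vector from vertex i−1 to vertex i+1 and A_i > 0 is the area of triangle (i−1, i, i+1). Then the projective map induced by Glick's operator G_P maps the line at infinity to itself (i.e., is an affine map in the chart z = 1) if and only if d_P = 0. -/
theorem cross2_sum_smul_right {ι : Type*} (s : Finset ι) (w : ℝ × ℝ) (c : ι → ℝ)
    (d : ι → ℝ × ℝ) : cross2 w (∑ i ∈ s, c i • d i) = ∑ i ∈ s, c i * cross2 w (d i) := by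
  simp only [cross2, Prod.fst_sum, Prod.snd_sum, Prod.smul_fst, Prod.smul_snd, smul_eq_mul,
    Finset.mul_sum, ← Finset.sum_sub_distrib]
  exact Finset.sum_congr rfl fun i _ => by ring

theorem forall_cross2_eq_zero_iff (d : ℝ × ℝ) : (∀ x y : ℝ, cross2 (x, y) d = 0) ↔ d = 0 := by
  refine ⟨fun h => ?_, fun h x y => by simp [h, cross2]⟩
  have h₁ := h 1 0
  have h₂ := h 0 1
  simp only [cross2, one_mul, zero_mul, sub_zero, zero_sub, neg_eq_zero] at h₁ h₂
  exact Prod.ext h₂ h₁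

theorem det3_lift_lift_lift (a b c : ℝ × ℝ) :
    det3 ![a.1, a.2, 1] ![b.1, b.2, 1] ![c.1, c.2, 1] = cross2 (b - a) (c - b) := by
  simp only [det3, cross2, Prod.fst_sub, Prod.snd_sub, Matrix.cons_val_zero,
    Matrix.cons_val_one, Matrix.cons_val_two, Matrix.head_cons, Matrix.tail_cons]
  ring

theorem det3_lift_vec_lift (a c : ℝ × ℝ) (x y : ℝ) :
    det3 ![a.1, a.2, 1] ![x, y, 0] ![c.1, c.2, 1] = cross2 (x, y) (c - a) := by
  simp only [det3, cross2, Prod.fst_sub, Prod.snd_sub, Matrix.cons_val_zero,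
    Matrix.cons_val_one, Matrix.cons_val_two, Matrix.head_cons, Matrix.tail_cons]
  ring

theorem glick_lift_vec_apply_two {n : ℕ} [NeZero n] (p : Fin n → ℝ × ℝ) (x y : ℝ) :
    glick (fun i => ![(p i).1, (p i).2, 1]) ![x, y, 0] 2 =
      -cross2 (x, y) (∑ i : Fin n,
        (cross2 (p i - p (i - 1)) (p (i + 1) - p i))⁻¹ • (p (i + 1) - p (i - 1))) := by
  simp only [glick, Pi.sub_apply, Pi.smul_apply, Finset.sum_apply, smul_eq_mul,
    det3_lift_lift_lift, det3_lift_vec_lift, cross2_sum_smul_right]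
  simp [div_eq_inv_mul, mul_comm]

theorem glick_affine_iff_dP_zero_general
    {n : ℕ} [NeZero n]
    (p : Fin n → ℝ × ℝ) :
    -- `G_P` preserves the line at infinity (i.e. is affine in the chart `z = 1`)
    (∀ x y : ℝ, glick (fun i => ![(p i).1, (p i).2, 1]) ![x, y, 0] 2 = 0)
      ↔
    -- ... if and only if  `d_P = ∑ i (1 / A i) • d_i = 0`
    (∑ i : Fin n,
        (cross2 (p i - p (i - 1)) (p (i + 1) - p i) / 2)⁻¹ •
          (p (i + 1) - p (i - 1))) = 0 := by
  have hdP : ∑ i : Fin n, (cross2 (p i - p (i - 1)) (p (i + 1) - p i) / 2)⁻¹ •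
        (p (i + 1) - p (i - 1)) =
      (2 : ℝ) • ∑ i : Fin n,
        (cross2 (p i - p (i - 1)) (p (i + 1) - p i))⁻¹ • (p (i + 1) - p (i - 1)) := by
    rw [Finset.smul_sum]
    exact Finset.sum_congr rfl fun i _ => by rw [smul_smul, inv_div, div_eq_mul_inv]
  simp only [glick_lift_vec_apply_two, neg_eq_zero, forall_cross2_eq_zero_iff, hdP,
    smul_eq_zero, two_ne_zero, false_or]

theorem glick_affine_iff_dP_zero
    {n : ℕ} [NeZero n] (hn : 3 ≤ n)
    (p : Fin n → ℝ × ℝ) (hconv : ConvexCCW p) :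
    -- `G_P` preserves the line at infinity (i.e. is affine in the chart `z = 1`)
    (∀ x y : ℝ, glick (fun i => ![(p i).1, (p i).2, 1]) ![x, y, 0] 2 = 0)
      ↔
    -- ... if and only if  `d_P = ∑ i (1 / A i) • d_i = 0`
    (∑ i : Fin n,
        (cross2 (p i - p (i - 1)) (p (i + 1) - p i) / 2)⁻¹ •
          (p (i + 1) - p (i - 1))) = 0 :=
  glick_affine_iff_dP_zero_general p
end

section
/- Let C_1 and C_2 be conics in RP^2 given by positive-definite-compatible symmetric matrices such that C_1 (the inscribed conic) lies inside C_2 (the circumscribed conic). Let K be a compact convex set contained in the closed region bounded by C_2. Then the map R = Q_I^{-1} Q_C sends K into the open region bounded by C_1: for any point A inside or on C_2, the polar line of A with respect to C_2 does not meet the interior of C_2, and the pole of that line with respect to C_1 lies strictly inside C_1. -/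
/-!
Both forms are congruent to the Minkowski form `x₀² + x₁² - x₂²`. Put `l = Q_C a` and
`y = Q_I⁻¹ l`, so that `Q_I y = l`. If `y` were not strictly inside `C₁`, the line `l`, which
is the `Q_I`-orthogonal complement of `y`, would contain a nonzero point `x` inside or on `C₁`.
By the nesting `x` lies strictly inside `C₂`; but `l` is also the `Q_C`-orthogonal complement
of `a`, and in Lorentzian signature the orthogonal complement of a non-spacelike vector
contains no timelike vector.
-/

open Matrix

lemma mulVec_ne_zero_of_isUnit_det {n K : Type*} [Fintype n] [DecidableEq n] [Field K]
    {M : Matrix n n K} (hM : IsUnit M.det) {v : n → K} (hv : v ≠ 0) : M *ᵥ v ≠ 0 :=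
  (mulVec_injective_of_det_ne_zero hM.ne_zero).ne_iff' (mulVec_zero M) |>.2 hv

section Minkowski

lemma dotProduct_minkowski_mulVec (u v : Fin 3 → ℝ) :
    u ⬝ᵥ diagonal ![1, 1, -1] *ᵥ v = u 0 * v 0 + u 1 * v 1 - u 2 * v 2 := by
  simp only [dotProduct, mulVec_diagonal, Fin.sum_univ_three, cons_val_zero, cons_val_one,
    cons_val, one_mul, neg_mul, mul_neg]
  ring

lemma eq_zero_of_sq_add_sq_le_sq {u : Fin 3 → ℝ}
    (h : u 0 * u 0 + u 1 * u 1 ≤ u 2 * u 2) (h₂ : u 2 = 0) : u = 0 := by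
  have h₀ : u 0 = 0 := by nlinarith [mul_self_nonneg (u 1)]
  have h₁ : u 1 = 0 := by nlinarith [mul_self_nonneg (u 0)]
  funext i
  fin_cases i <;> assumption

/-- The witness is `v = (u₀u₂, u₁u₂, u₀² + u₁²)`, of norm `(u₀² + u₁²)(u₂² - u₀² - u₁²)`. -/
lemma minkowski_exists_nonpos_orthogonal {u : Fin 3 → ℝ} (hu : u ≠ 0)
    (huu : 0 ≤ u ⬝ᵥ diagonal ![1, 1, -1] *ᵥ u) :
    ∃ v ≠ 0, v ⬝ᵥ diagonal ![1, 1, -1] *ᵥ u = 0 ∧ v ⬝ᵥ diagonal ![1, 1, -1] *ᵥ v ≤ 0 := by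
  rw [dotProduct_minkowski_mulVec] at huu
  have hr : 0 < u 0 * u 0 + u 1 * u 1 := by
    refine lt_of_le_of_ne (add_nonneg (mul_self_nonneg _) (mul_self_nonneg _)) fun hr ↦ hu ?_
    exact eq_zero_of_sq_add_sq_le_sq (by nlinarith) (by nlinarith [mul_self_nonneg (u 2)])
  refine ⟨![u 0 * u 2, u 1 * u 2, u 0 * u 0 + u 1 * u 1], fun hv ↦ ?_, ?_, ?_⟩
  · simpa [hr.ne'] using congrFun hv 2
  all_goals
    simp only [dotProduct_minkowski_mulVec, cons_val_zero, cons_val_one, cons_val]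
  · ring
  · nlinarith

lemma minkowski_nonneg_of_orthogonal {u v : Fin 3 → ℝ} (hu : u ≠ 0)
    (huu : u ⬝ᵥ diagonal ![1, 1, -1] *ᵥ u ≤ 0) (huv : v ⬝ᵥ diagonal ![1, 1, -1] *ᵥ u = 0) :
    0 ≤ v ⬝ᵥ diagonal ![1, 1, -1] *ᵥ v := by
  simp only [dotProduct_minkowski_mulVec] at huu huv ⊢
  have hu₂ : 0 < u 2 * u 2 :=
    mul_self_pos.2 fun h₂ ↦ hu (eq_zero_of_sq_add_sq_le_sq (by linarith) h₂)
  have key : u 2 * u 2 * (v 2 * v 2) ≤ u 2 * u 2 * (v 0 * v 0 + v 1 * v 1) :=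
    calc u 2 * u 2 * (v 2 * v 2) = (u 0 * v 0 + u 1 * v 1) ^ 2 := by
          rw [show u 0 * v 0 + u 1 * v 1 = u 2 * v 2 by linarith]; ring
      _ ≤ (u 0 * u 0 + u 1 * u 1) * (v 0 * v 0 + v 1 * v 1) := by
          nlinarith [sq_nonneg (u 0 * v 1 - u 1 * v 0)]
      _ ≤ u 2 * u 2 * (v 0 * v 0 + v 1 * v 1) := by
          gcongr ?_ * _
          · exact add_nonneg (mul_self_nonneg _) (mul_self_nonneg _)
          · linarith
  linarith [le_of_mul_le_mul_left key hu₂]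

end Minkowski

lemma dotProduct_transpose_mul_mul_mulVec {m n R : Type*} [Fintype m] [Fintype n]
    [CommSemiring R] (B : Matrix m n R) (D : Matrix m m R) (x y : n → R) :
    x ⬝ᵥ (Bᵀ * D * B) *ᵥ y = B *ᵥ x ⬝ᵥ D *ᵥ B *ᵥ y := by
  rw [← mulVec_mulVec, ← mulVec_mulVec, dotProduct_mulVec, vecMul_transpose]

def IsLorentzian (Q : Matrix (Fin 3) (Fin 3) ℝ) : Prop :=
  ∃ B : Matrix (Fin 3) (Fin 3) ℝ, IsUnit B.det ∧ Q = Bᵀ * diagonal ![1, 1, -1] * B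

namespace IsLorentzian

variable {Q : Matrix (Fin 3) (Fin 3) ℝ}

lemma isUnit_det (hQ : IsLorentzian Q) : IsUnit Q.det := by
  obtain ⟨B, hB, rfl⟩ := hQ
  have hη : (diagonal ![(1 : ℝ), 1, -1]).det = -1 := by
    simp [det_diagonal, Fin.prod_univ_three]
  simpa [det_mul, hη] using hB

lemma exists_nonpos_orthogonal (hQ : IsLorentzian Q) {y : Fin 3 → ℝ} (hy : y ≠ 0)
    (hyy : 0 ≤ y ⬝ᵥ Q *ᵥ y) : ∃ x ≠ 0, x ⬝ᵥ Q *ᵥ y = 0 ∧ x ⬝ᵥ Q *ᵥ x ≤ 0 := by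
  obtain ⟨B, hB, rfl⟩ := hQ
  simp only [dotProduct_transpose_mul_mul_mulVec] at hyy ⊢
  obtain ⟨v, hv, hvy, hvv⟩ := minkowski_exists_nonpos_orthogonal
    (mulVec_ne_zero_of_isUnit_det hB hy) hyy
  have hBv : B *ᵥ B⁻¹ *ᵥ v = v := by rw [mulVec_mulVec, mul_nonsing_inv B hB, one_mulVec]
  refine ⟨B⁻¹ *ᵥ v, fun hx ↦ hv ?_, ?_⟩
  · rw [← hBv, hx, mulVec_zero]
  · rw [hBv]
    exact ⟨hvy, hvv⟩

lemma nonneg_of_orthogonal (hQ : IsLorentzian Q) {a x : Fin 3 → ℝ} (ha : a ≠ 0)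
    (haa : a ⬝ᵥ Q *ᵥ a ≤ 0) (hxa : x ⬝ᵥ Q *ᵥ a = 0) : 0 ≤ x ⬝ᵥ Q *ᵥ x := by
  obtain ⟨B, hB, rfl⟩ := hQ
  simp only [dotProduct_transpose_mul_mul_mulVec] at haa hxa ⊢
  exact minkowski_nonneg_of_orthogonal (mulVec_ne_zero_of_isUnit_det hB ha) haa hxa

end IsLorentzian

open Matrix in
theorem conic_operator_maps_inside_general
    (QI QC : Matrix (Fin 3) (Fin 3) ℝ)
    -- both conics are nondegenerate with signature (2,1)
    (hIsig : ∃ B : Matrix (Fin 3) (Fin 3) ℝ, IsUnit B.det ∧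
      QI = Bᵀ * Matrix.diagonal ![1, 1, -1] * B)
    (hCsig : ∃ B : Matrix (Fin 3) (Fin 3) ℝ, IsUnit B.det ∧
      QC = Bᵀ * Matrix.diagonal ![1, 1, -1] * B)
    -- the closed interior of `C₁` is contained in the open interior of `C₂`
    (hnest : ∀ x : Fin 3 → ℝ, x ≠ 0 →
      x ⬝ᵥ QI.mulVec x ≤ 0 → x ⬝ᵥ QC.mulVec x < 0) :
    -- `R = Q_I⁻¹ Q_C` maps the closed interior of `C₂` into the open interior of `C₁`
    ∀ a : Fin 3 → ℝ, a ≠ 0 → a ⬝ᵥ QC.mulVec a ≤ 0 →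
      ((QI⁻¹ * QC).mulVec a) ⬝ᵥ QI.mulVec ((QI⁻¹ * QC).mulVec a) < 0 := by
  intro a ha haa
  set y := (QI⁻¹ * QC) *ᵥ a
  have hQIy : QI *ᵥ y = QC *ᵥ a := by
    rw [mulVec_mulVec, ← Matrix.mul_assoc, mul_nonsing_inv _ (IsLorentzian.isUnit_det hIsig),
      Matrix.one_mul]
  have hy : y ≠ 0 := fun h ↦ mulVec_ne_zero_of_isUnit_det (IsLorentzian.isUnit_det hCsig) ha
    (by rw [← hQIy, h, mulVec_zero])
  by_contra! hyy
  obtain ⟨x, hx, hxy, hxx⟩ := IsLorentzian.exists_nonpos_orthogonal hIsig hy hyy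
  rw [hQIy] at hxy
  exact (hnest x hx hxx).not_ge (IsLorentzian.nonneg_of_orthogonal hCsig ha haa hxy)

open Matrix in
theorem conic_operator_maps_inside
    (QI QC : Matrix (Fin 3) (Fin 3) ℝ)
    (hQI : QI.IsSymm) (hQC : QC.IsSymm)
    -- both conics are nondegenerate with signature (2,1)
    (hIsig : ∃ B : Matrix (Fin 3) (Fin 3) ℝ, IsUnit B.det ∧
      QI = Bᵀ * Matrix.diagonal ![1, 1, -1] * B)
    (hCsig : ∃ B : Matrix (Fin 3) (Fin 3) ℝ, IsUnit B.det ∧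
      QC = Bᵀ * Matrix.diagonal ![1, 1, -1] * B)
    -- the closed interior of `C₁` is contained in the open interior of `C₂`
    (hnest : ∀ x : Fin 3 → ℝ, x ≠ 0 →
      x ⬝ᵥ QI.mulVec x ≤ 0 → x ⬝ᵥ QC.mulVec x < 0) :
    -- `R = Q_I⁻¹ Q_C` maps the closed interior of `C₂` into the open interior of `C₁`
    ∀ a : Fin 3 → ℝ, a ≠ 0 → a ⬝ᵥ QC.mulVec a ≤ 0 →
      ((QI⁻¹ * QC).mulVec a) ⬝ᵥ QI.mulVec ((QI⁻¹ * QC).mulVec a) < 0 :=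
  conic_operator_maps_inside_general QI QC hIsig hCsig hnest
end
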